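/- Let (X_t, Y_t)_{t≥1} be an adapted sequence of pairs of real random variables with respect to a filtration (F_t), and suppose that for every t and every z ∈ ℝ, P(X_t ≤ z | F_{t−1}) ≤ P(Y_t ≤ z | F_{t−1}) almost surely. Let (λ_t)_{t≥1} be a predictable sequence with values in [0,1] and (z_t)_{t≥1} a predictable sequence of real numbers. Then E_t = ∏_{ℓ=1}^t (1 + λ_ℓ(1{X_ℓ ≤ z_ℓ} − 1{Y_ℓ ≤ z_ℓ})) is a nonnegative supermartingale with E_0 = 1, and consequently P(∃ t : E_t ≥ 1/α) ≤ α for all α ∈ (0,1). -/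

import Mathlib

/-!
Since `λ_t` and `z_t` are known at time `t - 1`, the factor `1 + λ_t (1{X_t ≤ z_t} - 1{Y_t ≤ z_t})`
has conditional mean at most `1` as soon as the conditional dominance, assumed at constant
thresholds `c`, also holds at the predictable threshold `z_t`. For that, round `z_t` up to the grid
`ℤ / (n + 1)`, where the dominance is a countable sum of constant-threshold instances, and let
`n → ∞` using continuity of `P` from above. A product of bounded nonnegative factors with
conditional mean at most `1` is a supermartingale, and Ville's inequality follows from optional
stopping at the first time the process exceeds `1 / α`.
-/

open MeasureTheory Filter

section ConditionalDominance

variable {Ω : Type*} {m' m : MeasurableSpace Ω} {P : Measure Ω}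

theorem setIntegral_condExp_indicator_one [IsFiniteMeasure P] (hm : m' ≤ m) {B S : Set Ω}
    (hB : MeasurableSet B) (hS : MeasurableSet[m'] S) :
    ∫ ω in S, P[B.indicator (fun _ => (1 : ℝ)) | m'] ω ∂P = P.real (S ∩ B) := by
  rw [setIntegral_condExp hm ((integrable_const 1).indicator hB) hS,
    integral_indicator_const _ hB, smul_eq_mul, mul_one, measureReal_restrict_apply hB,
    Set.inter_comm]

theorem condExp_indicator_one_ae_le_iff [IsFiniteMeasure P] (hm : m' ≤ m) {B C : Set Ω}
    (hB : MeasurableSet B) (hC : MeasurableSet C) :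
    P[B.indicator (fun _ => (1 : ℝ)) | m'] ≤ᵐ[P] P[C.indicator (fun _ => (1 : ℝ)) | m'] ↔
      ∀ S, MeasurableSet[m'] S → P (S ∩ B) ≤ P (S ∩ C) := by
  constructor
  · intro h S hS
    have := setIntegral_mono_ae integrable_condExp.integrableOn integrable_condExp.integrableOn h
      (s := S)
    rwa [setIntegral_condExp_indicator_one hm hB hS, setIntegral_condExp_indicator_one hm hC hS,
      measureReal_def, measureReal_def,
      ENNReal.toReal_le_toReal (measure_ne_top _ _) (measure_ne_top _ _)] at this
  · intro h
    refine ae_le_of_ae_le_trim (hm := hm) <| ae_le_of_forall_setIntegral_le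
      (integrable_condExp.trim hm stronglyMeasurable_condExp)
      (integrable_condExp.trim hm stronglyMeasurable_condExp) fun S hS _ => ?_
    rw [← setIntegral_trim hm stronglyMeasurable_condExp hS,
      ← setIntegral_trim hm stronglyMeasurable_condExp hS,
      setIntegral_condExp_indicator_one hm hB hS, setIntegral_condExp_indicator_one hm hC hS]
    exact ENNReal.toReal_mono (measure_ne_top _ _) (h S hS)

theorem measure_inter_setOf_le_le_of_countable_threshold {ι : Type*} [Countable ι]
    [MeasurableSpace ι] [MeasurableSingletonClass ι] {X Y : Ω → ℝ} (hm : m' ≤ m)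
    (hX : Measurable X) (hY : Measurable Y)
    (hdom : ∀ c S, MeasurableSet[m'] S → P (S ∩ {ω | X ω ≤ c}) ≤ P (S ∩ {ω | Y ω ≤ c}))
    {κ : Ω → ι} (hκ : Measurable[m'] κ) (r : ι → ℝ) {A : Set Ω} (hA : MeasurableSet[m'] A) :
    P (A ∩ {ω | X ω ≤ r (κ ω)}) ≤ P (A ∩ {ω | Y ω ≤ r (κ ω)}) := by
  have hfiber : ∀ i, MeasurableSet[m'] (A ∩ κ ⁻¹' {i}) :=
    fun i => hA.inter (hκ (measurableSet_singleton i))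
  have hsplit : ∀ W : Ω → ℝ, Measurable W → P (A ∩ {ω | W ω ≤ r (κ ω)}) =
      ∑' i, P (A ∩ κ ⁻¹' {i} ∩ {ω | W ω ≤ r i}) := by
    intro W hW
    have hunion : A ∩ {ω | W ω ≤ r (κ ω)} = ⋃ i, A ∩ κ ⁻¹' {i} ∩ {ω | W ω ≤ r i} := by
      ext ω
      simp only [Set.mem_inter_iff, Set.mem_ofPred_eq, Set.mem_iUnion, Set.mem_preimage,
        Set.mem_singleton_iff]
      exact ⟨fun h => ⟨κ ω, ⟨h.1, rfl⟩, h.2⟩, fun ⟨i, ⟨hA, hi⟩, hW⟩ => ⟨hA, hi ▸ hW⟩⟩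
    rw [hunion, measure_iUnion]
    · intro i j hij
      refine Set.disjoint_left.2 fun ω hi hj => hij ?_
      exact hi.1.2.symm.trans hj.1.2
    · exact fun i => (hm _ (hfiber i)).inter (measurableSet_le hW measurable_const)
  rw [hsplit X hX, hsplit Y hY]
  exact ENNReal.tsum_le_tsum fun i => hdom (r i) _ (hfiber i)

theorem tendsto_measure_inter_setOf_le_add_one_div [IsFiniteMeasure P] {A : Set Ω}
    (hA : MeasurableSet A) {f g : Ω → ℝ} (hf : Measurable f) (hg : Measurable g) :
    Tendsto (fun n : ℕ => P (A ∩ {ω | f ω ≤ g ω + 1 / (n + 1)})) atTop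
      (nhds (P (A ∩ {ω | f ω ≤ g ω}))) := by
  have hinter : (⋂ n : ℕ, A ∩ {ω | f ω ≤ g ω + 1 / (n + 1)}) = A ∩ {ω | f ω ≤ g ω} := by
    ext ω
    simp only [Set.mem_iInter, Set.mem_inter_iff, Set.mem_ofPred_eq]
    refine ⟨fun h => ⟨(h 0).1, le_of_forall_pos_le_add fun ε hε => ?_⟩, fun h n => ⟨h.1, ?_⟩⟩
    · obtain ⟨n, hn⟩ := exists_nat_one_div_lt hε
      exact (h n).2.trans (by linarith)
    · exact h.2.trans (le_add_of_nonneg_right (by positivity))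
  rw [← hinter]
  refine tendsto_measure_iInter_atTop
    (fun n => (hA.inter (measurableSet_le hf (hg.add measurable_const))).nullMeasurableSet)
    (fun k n hkn ω h => ⟨h.1, le_trans (α := ℝ) h.2 ?_⟩) ⟨0, measure_ne_top _ _⟩
  gcongr

theorem measure_inter_setOf_le_le_of_measurable_threshold [IsFiniteMeasure P] {X Y ζ : Ω → ℝ}
    (hm : m' ≤ m) (hX : Measurable X) (hY : Measurable Y)
    (hdom : ∀ c S, MeasurableSet[m'] S → P (S ∩ {ω | X ω ≤ c}) ≤ P (S ∩ {ω | Y ω ≤ c}))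
    (hζ : Measurable[m'] ζ) {A : Set Ω} (hA : MeasurableSet[m'] A) :
    P (A ∩ {ω | X ω ≤ ζ ω}) ≤ P (A ∩ {ω | Y ω ≤ ζ ω}) := by
  have hgrid : ∀ n : ℕ, P (A ∩ {ω | X ω ≤ ζ ω}) ≤ P (A ∩ {ω | Y ω ≤ ζ ω + 1 / (n + 1)}) := by
    intro n
    have hq : (0 : ℝ) < n + 1 := by positivity
    calc P (A ∩ {ω | X ω ≤ ζ ω})
        ≤ P (A ∩ {ω | X ω ≤ (⌈ζ ω * (n + 1)⌉ : ℝ) / (n + 1)}) := by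
          refine measure_mono (Set.inter_subset_inter_right _ fun ω h => le_trans (α := ℝ) h ?_)
          rw [le_div_iff₀ hq]
          exact Int.le_ceil _
      _ ≤ P (A ∩ {ω | Y ω ≤ (⌈ζ ω * (n + 1)⌉ : ℝ) / (n + 1)}) :=
          measure_inter_setOf_le_le_of_countable_threshold hm hX hY hdom
            (Int.measurable_ceil.comp (hζ.mul_const _)) (fun k : ℤ => (k : ℝ) / (n + 1)) hA
      _ ≤ P (A ∩ {ω | Y ω ≤ ζ ω + 1 / (n + 1)}) := by
          refine measure_mono (Set.inter_subset_inter_right _ fun ω h => le_trans (α := ℝ) h ?_)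
          rw [div_le_iff₀ hq, add_mul, one_div_mul_cancel hq.ne']
          exact (Int.ceil_lt_add_one _).le
  exact ge_of_tendsto
    (tendsto_measure_inter_setOf_le_add_one_div (hm _ hA) hY (hζ.mono hm le_rfl))
    (Eventually.of_forall hgrid)

theorem condExp_ite_sub_ite_nonpos [IsFiniteMeasure P] {X Y ζ : Ω → ℝ} (hm : m' ≤ m)
    (hX : Measurable X) (hY : Measurable Y)
    (hdom : ∀ c : ℝ, P[{ω | X ω ≤ c}.indicator (fun _ => (1 : ℝ)) | m'] ≤ᵐ[P]
      P[{ω | Y ω ≤ c}.indicator (fun _ => (1 : ℝ)) | m'])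
    (hζ : Measurable[m'] ζ) :
    P[fun ω => (if X ω ≤ ζ ω then (1 : ℝ) else 0) - (if Y ω ≤ ζ ω then (1 : ℝ) else 0) | m']
      ≤ᵐ[P] 0 := by
  have hζ' : Measurable ζ := hζ.mono hm le_rfl
  have hXζ := measurableSet_le hX hζ'
  have hYζ := measurableSet_le hY hζ'
  have hle : P[{ω | X ω ≤ ζ ω}.indicator (fun _ => (1 : ℝ)) | m'] ≤ᵐ[P]
      P[{ω | Y ω ≤ ζ ω}.indicator (fun _ => (1 : ℝ)) | m'] :=
    (condExp_indicator_one_ae_le_iff hm hXζ hYζ).2 fun S hS =>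
      measure_inter_setOf_le_le_of_measurable_threshold hm hX hY
        (fun c S hS => (condExp_indicator_one_ae_le_iff hm (measurableSet_le hX measurable_const)
          (measurableSet_le hY measurable_const)).1 (hdom c) S hS) hζ hS
  have hfun : (fun ω => (if X ω ≤ ζ ω then (1 : ℝ) else 0) - (if Y ω ≤ ζ ω then (1 : ℝ) else 0))
      = {ω | X ω ≤ ζ ω}.indicator (fun _ => 1) - {ω | Y ω ≤ ζ ω}.indicator (fun _ => 1) := by
    ext ω
    simp only [Pi.sub_apply, Set.indicator_apply, Set.mem_ofPred_eq]
  rw [hfun]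
  filter_upwards [condExp_sub ((integrable_const (1 : ℝ)).indicator hXζ)
    ((integrable_const (1 : ℝ)).indicator hYζ) m', hle] with ω hω hleω
  rw [hω, Pi.sub_apply, Pi.zero_apply]
  exact sub_nonpos.2 hleω

theorem condExp_one_add_mul_le_one [IsFiniteMeasure P] (hm : m' ≤ m) {b D : Ω → ℝ} {C : ℝ}
    (hb : Measurable[m'] b) (hb_nonneg : ∀ ω, 0 ≤ b ω) (hb_le : ∀ ω, b ω ≤ C)
    (hD : Integrable D P) (hD_nonpos : P[D | m'] ≤ᵐ[P] 0) :
    P[fun ω => 1 + b ω * D ω | m'] ≤ᵐ[P] 1 := by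
  have hbD : Integrable (fun ω => b ω * D ω) P :=
    hD.bdd_mul (hb.mono hm le_rfl).aestronglyMeasurable (c := C) <|
      Eventually.of_forall fun ω => by
        rw [Real.norm_of_nonneg (hb_nonneg ω)]; exact hb_le ω
  have hsplit : P[fun ω => 1 + b ω * D ω | m'] =ᵐ[P] P[fun _ => (1 : ℝ) | m'] + P[b * D | m'] :=
    condExp_add (integrable_const (1 : ℝ)) hbD m'
  rw [condExp_const hm] at hsplit
  filter_upwards [hsplit, condExp_mul_of_stronglyMeasurable_left hb.stronglyMeasurable hbD hD,
    hD_nonpos] with ω hω hpull hDω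
  simp only [Pi.add_apply, Pi.mul_apply, Pi.zero_apply, Pi.one_apply] at hω hpull hDω ⊢
  rw [hω, hpull]
  nlinarith [hb_nonneg ω]

end ConditionalDominance

section Supermartingale

variable {Ω : Type*} {m : MeasurableSpace Ω} {P : Measure Ω} [IsFiniteMeasure P]
  {ℱ : Filtration ℕ m}

theorem supermartingale_prod_Icc {F : ℕ → Ω → ℝ} {C : ℝ}
    (hF_meas : ∀ t, Measurable[ℱ (t + 1)] (F (t + 1))) (hF_nonneg : ∀ t ω, 0 ≤ F t ω)
    (hF_le : ∀ t ω, F t ω ≤ C) (hF_condExp : ∀ t, P[F (t + 1) | ℱ t] ≤ᵐ[P] 1) :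
    Supermartingale (fun t ω => ∏ ℓ ∈ Finset.Icc 1 t, F ℓ ω) ℱ P := by
  set M : ℕ → Ω → ℝ := fun t ω => ∏ ℓ ∈ Finset.Icc 1 t, F ℓ ω
  have hM_zero : M 0 = 1 := by
    ext ω
    simp [M]
  have hM_succ : ∀ t, M (t + 1) = M t * F (t + 1) :=
    fun t => funext fun ω => Finset.prod_Icc_succ_top (Nat.le_add_left 1 t) _
  have hM_nonneg : ∀ t ω, 0 ≤ M t ω := fun t ω => Finset.prod_nonneg fun ℓ _ => hF_nonneg ℓ ω
  have hM_meas : ∀ t, Measurable[ℱ t] (M t) := by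
    intro t
    induction t with
    | zero => rw [hM_zero]; exact measurable_const
    | succ t ih => rw [hM_succ]; exact (ih.mono (ℱ.mono t.le_succ) le_rfl).mul (hF_meas t)
  have hF_bdd : ∀ t, ∀ᵐ ω ∂P, ‖F t ω‖ ≤ C := fun t => Eventually.of_forall fun ω => by
    rw [Real.norm_of_nonneg (hF_nonneg t ω)]
    exact hF_le t ω
  have hF_aesm : ∀ t, AEStronglyMeasurable (F (t + 1)) P :=
    fun t => ((hF_meas t).mono (ℱ.le _) le_rfl).aestronglyMeasurable
  have hF_int_mul : ∀ t {G : Ω → ℝ}, Integrable G P → Integrable (G * F (t + 1)) P :=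
    fun t _ hG => hG.mul_bdd (hF_aesm t) (hF_bdd _)
  have hM_int : ∀ t, Integrable (M t) P := by
    intro t
    induction t with
    | zero => rw [hM_zero]; exact integrable_const 1
    | succ t ih => rw [hM_succ]; exact hF_int_mul t ih
  refine supermartingale_nat (fun t => (hM_meas t).stronglyMeasurable) hM_int fun t => ?_
  calc P[M (t + 1) | ℱ t] = P[M t * F (t + 1) | ℱ t] := by rw [hM_succ]
    _ =ᵐ[P] M t * P[F (t + 1) | ℱ t] := condExp_mul_of_stronglyMeasurable_left
        (hM_meas t).stronglyMeasurable (hF_int_mul t (hM_int t))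
        (Integrable.of_bound (hF_aesm t) C (hF_bdd _))
    _ ≤ᵐ[P] M t := by
        filter_upwards [hF_condExp t] with ω hω
        simpa using mul_le_mul_of_nonneg_left hω (hM_nonneg t ω)

namespace MeasureTheory.Supermartingale

variable {E : ℕ → Ω → ℝ}

theorem mul_measureReal_exists_le_le_integral_zero (hE : Supermartingale E ℱ P)
    (hE_nonneg : ∀ t ω, 0 ≤ E t ω) (c : ℝ) (n : ℕ) :
    c * P.real {ω | ∃ k ≤ n, c ≤ E k ω} ≤ ∫ ω, E 0 ω ∂P := by
  have hE_meas : ∀ t, Measurable[ℱ t] (E t) := fun t => (hE.stronglyAdapted t).measurable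
  set τ : Ω → WithTop ℕ := fun ω => (hittingBtwn E (Set.Ici c) 0 n ω : ℕ)
  have hτ : IsStoppingTime ℱ τ := Adapted.isStoppingTime_hittingBtwn hE_meas measurableSet_Ici
  have hτ_le : ∀ ω, τ ω ≤ n := fun ω => WithTop.coe_le_coe.mpr (hittingBtwn_le ω)
  have hint : Integrable (stoppedValue E τ) P := by
    simpa using (hE.neg.integrable_stoppedValue hτ hτ_le).neg
  have hstop : ∫ ω, stoppedValue E τ ω ∂P ≤ ∫ ω, E 0 ω ∂P := by
    have := hE.neg.expected_stoppedValue_mono (isStoppingTime_const ℱ 0) hτ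
      (fun ω => WithTop.coe_le_coe.mpr (Nat.zero_le _)) hτ_le
    change ∫ ω, -E 0 ω ∂P ≤ ∫ ω, -stoppedValue E τ ω ∂P at this
    rwa [integral_neg, integral_neg, neg_le_neg_iff] at this
  have hG : MeasurableSet {ω | ∃ k ≤ n, c ≤ E k ω} := by
    simp only [Set.ofPred_exists]
    exact MeasurableSet.iUnion fun k => (MeasurableSet.const (k ≤ n)).inter
      (measurableSet_le measurable_const ((hE_meas k).mono (ℱ.le k) le_rfl))
  calc c * P.real {ω | ∃ k ≤ n, c ≤ E k ω}
      ≤ ∫ ω in {ω | ∃ k ≤ n, c ≤ E k ω}, stoppedValue E τ ω ∂P :=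
        setIntegral_ge_of_const_le_real hG (measure_ne_top _ _)
          (fun ω ⟨k, hkn, hk⟩ => stoppedValue_hittingBtwn_mem ⟨k, ⟨Nat.zero_le _, hkn⟩, hk⟩)
          hint.integrableOn
    _ ≤ ∫ ω, stoppedValue E τ ω ∂P :=
        setIntegral_le_integral hint (Eventually.of_forall fun ω => hE_nonneg _ ω)
    _ ≤ ∫ ω, E 0 ω ∂P := hstop

theorem ville_ineq (hE : Supermartingale E ℱ P) (hE_nonneg : ∀ t ω, 0 ≤ E t ω)
    {c : ℝ} (hc : 0 < c) :
    P {ω | ∃ t, c ≤ E t ω} ≤ ENNReal.ofReal ((∫ ω, E 0 ω ∂P) / c) := by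
  have hunion : {ω | ∃ t, c ≤ E t ω} = ⋃ n, {ω | ∃ k ≤ n, c ≤ E k ω} := by
    ext ω
    simp only [Set.mem_ofPred_eq, Set.mem_iUnion]
    exact ⟨fun ⟨t, ht⟩ => ⟨t, t, le_rfl, ht⟩, fun ⟨_, k, _, hk⟩ => ⟨k, hk⟩⟩
  have hmono : Monotone fun n => {ω | ∃ k ≤ n, c ≤ E k ω} :=
    fun a b hab ω ⟨k, hk, hck⟩ => ⟨k, hk.trans hab, hck⟩
  rw [hunion, hmono.measure_iUnion]
  refine iSup_le fun n => ?_
  rw [← ofReal_measureReal]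
  refine ENNReal.ofReal_le_ofReal ?_
  rw [le_div_iff₀' hc]
  exact hE.mul_measureReal_exists_le_le_integral_zero hE_nonneg c n

end MeasureTheory.Supermartingale

end Supermartingale

/-- Under conditional first-order stochastic dominance of `X_t` over `Y_t` given the past,
the predictably-bet coin-betting wealth process
`E_t = ∏_{ℓ=1}^t (1 + λ_ℓ (1{X_ℓ ≤ z_ℓ} − 1{Y_ℓ ≤ z_ℓ}))` is a nonnegative supermartingale
with `E_0 = 1`, and satisfies Ville's inequality. -/
theorem fsd_test_supermartingale_and_ville
    {Ω : Type*} {m : MeasurableSpace Ω} (P : Measure Ω) [IsProbabilityMeasure P]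
    (ℱ : Filtration ℕ m) (X Y : ℕ → Ω → ℝ)
    (hXadp : ∀ t, Measurable[ℱ t] (X t)) (hYadp : ∀ t, Measurable[ℱ t] (Y t))
    (hdom : ∀ t : ℕ, 1 ≤ t → ∀ c : ℝ, ∀ᵐ ω ∂P,
      (P[Set.indicator {ω' | X t ω' ≤ c} (fun _ => (1 : ℝ)) | ℱ (t - 1)]) ω ≤
      (P[Set.indicator {ω' | Y t ω' ≤ c} (fun _ => (1 : ℝ)) | ℱ (t - 1)]) ω)
    (lam z : ℕ → Ω → ℝ)
    (hlampred : ∀ t : ℕ, 1 ≤ t → Measurable[ℱ (t - 1)] (lam t))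
    (hzpred : ∀ t : ℕ, 1 ≤ t → Measurable[ℱ (t - 1)] (z t))
    (hlam : ∀ t ω, lam t ω ∈ Set.Icc (0 : ℝ) 1)
    (E : ℕ → Ω → ℝ)
    (hE : ∀ t ω, E t ω = ∏ ℓ ∈ Finset.Icc 1 t,
      (1 + lam ℓ ω * ((if X ℓ ω ≤ z ℓ ω then (1 : ℝ) else 0)
        - (if Y ℓ ω ≤ z ℓ ω then (1 : ℝ) else 0)))) :
    Supermartingale E ℱ P ∧ (∀ ω, E 0 ω = 1) ∧ (∀ t ω, 0 ≤ E t ω) ∧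
    ∀ α : ℝ, α ∈ Set.Ioo (0 : ℝ) 1 →
      P {ω | ∃ t : ℕ, 1 / α ≤ E t ω} ≤ ENNReal.ofReal α := by
  set D : ℕ → Ω → ℝ := fun ℓ ω =>
    (if X ℓ ω ≤ z ℓ ω then (1 : ℝ) else 0) - (if Y ℓ ω ≤ z ℓ ω then (1 : ℝ) else 0)
  have hD_abs : ∀ ℓ ω, |D ℓ ω| ≤ 1 := fun ℓ ω => by
    simp only [D]
    split_ifs <;> norm_num
  have hD_meas : ∀ t, Measurable[ℱ (t + 1)] (D (t + 1)) := fun t => by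
    have hz := (hzpred (t + 1) le_add_self).mono (ℱ.mono t.le_succ) le_rfl
    exact (Measurable.ite (measurableSet_le (hXadp _) hz) measurable_const measurable_const).sub
      (Measurable.ite (measurableSet_le (hYadp _) hz) measurable_const measurable_const)
  have hfactor : ∀ ℓ ω, 0 ≤ 1 + lam ℓ ω * D ℓ ω ∧ 1 + lam ℓ ω * D ℓ ω ≤ 2 := fun ℓ ω => by
    obtain ⟨hD_lo, hD_hi⟩ := abs_le.1 (hD_abs ℓ ω)
    obtain ⟨hlam_lo, hlam_hi⟩ := hlam ℓ ω
    constructor <;> nlinarith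
  have hE_nonneg : ∀ t ω, 0 ≤ E t ω := fun t ω =>
    (hE t ω).symm ▸ Finset.prod_nonneg fun ℓ _ => (hfactor ℓ ω).1
  have hsuper : Supermartingale E ℱ P := by
    rw [show E = fun t ω => ∏ ℓ ∈ Finset.Icc 1 t, (1 + lam ℓ ω * D ℓ ω) from
      funext fun t => funext (hE t)]
    refine supermartingale_prod_Icc (fun t => ?_) (fun ℓ ω => (hfactor ℓ ω).1)
      (fun ℓ ω => (hfactor ℓ ω).2) fun t => ?_
    · exact measurable_const.add
        (((hlampred (t + 1) le_add_self).mono (ℱ.mono t.le_succ) le_rfl).mul (hD_meas t))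
    · exact condExp_one_add_mul_le_one (ℱ.le t) (hlampred (t + 1) le_add_self)
        (fun ω => (hlam _ ω).1) (fun ω => (hlam _ ω).2)
        (Integrable.of_bound ((hD_meas t).mono (ℱ.le _) le_rfl).aestronglyMeasurable 1
          (Eventually.of_forall (hD_abs _)))
        (condExp_ite_sub_ite_nonpos (ℱ.le t) ((hXadp _).mono (ℱ.le _) le_rfl)
          ((hYadp _).mono (ℱ.le _) le_rfl) (hdom (t + 1) le_add_self) (hzpred (t + 1) le_add_self))
  have hE_zero : ∀ ω, E 0 ω = 1 := fun ω => by simp [hE]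
  refine ⟨hsuper, hE_zero, hE_nonneg, fun α ⟨hα, _⟩ => ?_⟩
  simpa [hE_zero] using hsuper.ville_ineq hE_nonneg (one_div_pos.2 hα)
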